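/- Let 0 < p < 1 and let a be a p-atom supported on I_M. There exists a constant c_p depending only on p such that for every x ∈ I_s \ I_{s+1} with 0 ≤ s < M, the weighted maximal function satisfies sup_{n ∈ ℕ} |S_n a(x)| / 2^{ρ(n)(1/p−1)} ≤ c_p · 2^{s/p}, where ρ(n) = |n| − [n]. -/

import Mathlib

open MeasureTheory Finset ENNReal NNReal

noncomputable section

/-- The dyadic (Walsh) group `G = (ℤ/2)^ℕ`. -/
abbrev G : Type := ℕ → ZMod 2

/-- The dyadic interval `I_n(x)`: points agreeing with `x` in the first `n` coordinates. -/
def cyl (n : ℕ) (x : G) : Set G := {y : G | ∀ j < n, y j = x j}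

/-- The dyadic interval `I_n = I_n(0)`. -/
def Icyl (n : ℕ) : Set G := cyl n 0

/-- The `k`-th Rademacher function `r_k(x) = (-1)^{x_k}`. -/
def rad (k : ℕ) (x : G) : ℝ := (-1 : ℝ) ^ (x k).val

/-- The `n`-th Walsh function `w_n = ∏_k r_k^{n_k}`, `n_k` the binary digits of `n`. -/
def walsh (n : ℕ) (x : G) : ℝ :=
  ∏ k ∈ Finset.range n, if n.testBit k then rad k x else 1

/-- The `n`-th Walsh–Dirichlet kernel `D_n = ∑_{k<n} w_k`. -/
def dirichlet (n : ℕ) (x : G) : ℝ := ∑ k ∈ Finset.range n, walsh k x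

/-- `k`-th Walsh–Fourier coefficient of `f` with respect to the measure `μ`. -/
def coef (μ : Measure G) (f : G → ℝ) (k : ℕ) : ℝ := ∫ x, f x * walsh k x ∂μ

/-- `n`-th partial sum of the Walsh–Fourier series of `f`. -/
def psum (μ : Measure G) (n : ℕ) (f : G → ℝ) (x : G) : ℝ :=
  ∑ k ∈ Finset.range n, coef μ f k * walsh k x

/-- `|n|`: position of the highest nonzero binary digit of `n`. -/
def hi (n : ℕ) : ℕ := Nat.log 2 n

/-- `[n]`: position of the lowest nonzero binary digit of `n`. -/
def lo (n : ℕ) : ℕ := padicValNat 2 n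

/-- `ρ(n) = |n| - [n]`. -/
def rho (n : ℕ) : ℕ := hi n - lo n

/-- `e_m ∈ G`: the element with `m`-th coordinate `1` and all others `0`. -/
def eG (m : ℕ) : G := fun j => if j = m then 1 else 0

/-- `a` is a `p`-atom supported on the dyadic interval `I_M`. -/
def IsPAtom (μ : Measure G) (p : ℝ) (M : ℕ) (a : G → ℝ) : Prop :=
  Measurable a ∧ (∀ x, x ∉ Icyl M → a x = 0) ∧ (∫ x, a x ∂μ) = 0 ∧
    ∀ x, |a x| ≤ (2 : ℝ) ^ ((M : ℝ) / p)

/-- The hypothesis that `μ` is the Haar (fair-coin product) probability measure on `G`,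
characterized by its values on dyadic intervals. -/
def IsHaarG (μ : Measure G) : Prop := ∀ (n : ℕ) (x : G), μ (cyl n x) = 2⁻¹ ^ n

/-- The `p`-th power of the `H_p` quasi-norm: `∫ (sup_n |S_{2^n} f|)^p dμ`. -/
def HpP (μ : Measure G) (p : ℝ) (f : G → ℝ) : ℝ≥0∞ :=
  ∫⁻ x, (⨆ n : ℕ, ENNReal.ofReal |psum μ (2 ^ n) f x|) ^ p ∂μ

/-- The weighted maximal operator `sup_n |S_n f| / 2^{ρ(n)(1/p-1)}` (with values in `ℝ≥0∞`). -/
def maxW (μ : Measure G) (p : ℝ) (f : G → ℝ) (x : G) : ℝ≥0∞ :=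
  ⨆ n : ℕ, ENNReal.ofReal (|psum μ n f x| / 2 ^ ((rho n : ℝ) * (1 / p - 1)))

/-- The `p`-th power of the weak-`L_p` quasi-norm of a `ℝ≥0∞`-valued function. -/
def weakLpP (μ : Measure G) (p : ℝ) (g : G → ℝ≥0∞) : ℝ≥0∞ :=
  ⨆ t : ℝ≥0, (t : ℝ≥0∞) ^ p * μ {x | (t : ℝ≥0∞) < g x}

/-! Off `I_M`, `S_n a = â(2^M q) w_{2^M q} D_{n mod 2^M}` with `q = ⌊n / 2^M⌋`: since `a` is
supported on `I_M`, its Walsh coefficients are constant on the blocks `[2^M q, 2^M (q+1))`, and each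
full block contributes a multiple of `D_{2^M}`, which vanishes off `I_M`. Off `I_{s+1}` the same
splitting bounds `|D_{n mod 2^M}|` by `n mod 2^{s+1} < 2^{s+1}`, while the coefficient is at most
`2^{M/p} |I_M| = 2^{M(1/p-1)}`. A nonzero `S_n a(x)` forces `|n| ≥ M` and `[n] ≤ s`, so
`ρ(n) ≥ M - s` and the weight absorbs the factor `2^{(M-s)(1/p-1)}`. -/

lemma walsh_eq_prod_range {n N : ℕ} (hn : n ≤ N) (x : G) :
    walsh n x = ∏ k ∈ range N, if n.testBit k then rad k x else 1 := by
  refine prod_subset (range_subset_range.mpr hn) fun k _ hk => ?_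
  have : n < 2 ^ k := (not_lt.mp (by simpa using hk)).trans_lt Nat.lt_two_pow_self
  simp [Nat.testBit_lt_two_pow this]

lemma walsh_two_pow_mul_add {m l : ℕ} (hl : l < 2 ^ m) (q : ℕ) (x : G) :
    walsh (2 ^ m * q + l) x = walsh (2 ^ m * q) x * walsh l x := by
  rw [walsh_eq_prod_range le_rfl, walsh_eq_prod_range (Nat.le_add_right (2 ^ m * q) l),
    walsh_eq_prod_range (Nat.le_add_left l (2 ^ m * q)), ← prod_mul_distrib]
  refine prod_congr rfl fun k _ => ?_
  rw [Nat.testBit_two_pow_mul_add q hl,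
    show 2 ^ m * q = 2 ^ m * q + 0 from rfl, Nat.testBit_two_pow_mul_add q (Nat.two_pow_pos m)]
  by_cases hk : k < m
  · simp [hk]
  · have hlk : l < 2 ^ k := hl.trans_le (Nat.pow_le_pow_right two_pos (not_lt.mp hk))
    simp [hk, Nat.testBit_lt_two_pow hlk]

lemma walsh_two_pow (m : ℕ) (x : G) : walsh (2 ^ m) x = rad m x := by
  rw [walsh, prod_eq_single_of_mem m (mem_range.mpr Nat.lt_two_pow_self)]
  · simp
  · intro k _ hk
    simp [Ne.symm hk]

lemma abs_walsh_le_one (n : ℕ) (x : G) : |walsh n x| ≤ 1 := by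
  rw [walsh, abs_prod]
  refine prod_le_one (fun _ _ => abs_nonneg _) fun k _ => ?_
  split_ifs <;> simp [rad, abs_pow]

lemma walsh_eq_one_of_mem_Icyl {m l : ℕ} (hl : l < 2 ^ m) {x : G} (hx : x ∈ Icyl m) :
    walsh l x = 1 := by
  refine prod_eq_one fun k _ => ?_
  by_cases hb : l.testBit k
  · have hkm : k < m := by
      by_contra hkm
      exact absurd hb (by
        simp [Nat.testBit_lt_two_pow (hl.trans_le (Nat.pow_le_pow_right two_pos (not_lt.mp hkm)))])
    simp [hb, rad, hx k hkm]
  · simp [hb]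

lemma Icyl_antitone {m₁ m₂ : ℕ} (h : m₁ ≤ m₂) : Icyl m₂ ⊆ Icyl m₁ :=
  fun _ hy j hj => hy j (hj.trans_le h)

lemma dirichlet_zero (x : G) : dirichlet 0 x = 0 := by simp [dirichlet]

lemma abs_dirichlet_le (n : ℕ) (x : G) : |dirichlet n x| ≤ n := by
  calc |dirichlet n x| ≤ ∑ k ∈ range n, |walsh k x| := abs_sum_le_sum_abs _ _
    _ ≤ ∑ _k ∈ range n, (1 : ℝ) := sum_le_sum fun k _ => abs_walsh_le_one k x
    _ = n := by simp

lemma dirichlet_two_pow (m : ℕ) (x : G) :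
    dirichlet (2 ^ m) x = ∏ j ∈ range m, (1 + rad j x) := by
  induction m with
  | zero => simp [dirichlet, walsh]
  | succ m ih =>
    have hw : ∀ k ∈ range (2 ^ m), walsh (2 ^ m + k) x = rad m x * walsh k x := fun k hk => by
      simpa [walsh_two_pow] using walsh_two_pow_mul_add (mem_range.mp hk) 1 x
    rw [dirichlet, pow_succ, mul_two, sum_range_add, sum_congr rfl hw, ← mul_sum, ← dirichlet,
      ih, prod_range_succ]
    ring

lemma dirichlet_two_pow_eq_zero {m : ℕ} {x : G} (hx : x ∉ Icyl m) :
    dirichlet (2 ^ m) x = 0 := by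
  obtain ⟨j, hj, hxj⟩ : ∃ j < m, x j ≠ 0 := by
    by_contra! h
    exact hx h
  rw [dirichlet_two_pow]
  refine prod_eq_zero (mem_range.mpr hj) ?_
  have : (x j).val = 1 := by
    have := ZMod.val_lt (x j)
    have := (ZMod.val_ne_zero (x j)).mpr hxj
    omega
  simp [rad, this]

section BlockSums

variable {m : ℕ} {c : ℕ → ℝ} {x : G}

lemma sum_walsh_block (hc : ∀ q l, l < 2 ^ m → c (2 ^ m * q + l) = c (2 ^ m * q))
    (q : ℕ) {r : ℕ} (hr : r ≤ 2 ^ m) :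
    ∑ l ∈ range r, c (2 ^ m * q + l) * walsh (2 ^ m * q + l) x
      = c (2 ^ m * q) * walsh (2 ^ m * q) x * dirichlet r x := by
  rw [dirichlet, mul_sum]
  refine sum_congr rfl fun l hl => ?_
  have hl : l < 2 ^ m := (mem_range.mp hl).trans_le hr
  rw [hc q l hl, walsh_two_pow_mul_add hl, mul_assoc]

lemma sum_walsh_full_blocks_eq_zero (hc : ∀ q l, l < 2 ^ m → c (2 ^ m * q + l) = c (2 ^ m * q))
    (hD : dirichlet (2 ^ m) x = 0) (q : ℕ) :
    ∑ k ∈ range (2 ^ m * q), c k * walsh k x = 0 := by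
  induction q with
  | zero => simp
  | succ q ih => rw [mul_add_one, sum_range_add, ih, sum_walsh_block hc q le_rfl, hD]; simp

lemma sum_walsh_eq_of_block_const
    (hc : ∀ q l, l < 2 ^ m → c (2 ^ m * q + l) = c (2 ^ m * q))
    (hD : dirichlet (2 ^ m) x = 0) (n : ℕ) :
    ∑ k ∈ range n, c k * walsh k x
      = c (2 ^ m * (n / 2 ^ m)) * walsh (2 ^ m * (n / 2 ^ m)) x * dirichlet (n % 2 ^ m) x := by
  conv_lhs => rw [← Nat.div_add_mod n (2 ^ m)]
  rw [sum_range_add, sum_walsh_full_blocks_eq_zero hc hD, zero_add,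
    sum_walsh_block hc _ (Nat.mod_lt n (Nat.two_pow_pos m)).le]

end BlockSums

lemma abs_dirichlet_le_mod {m : ℕ} {x : G} (hx : x ∉ Icyl m) (n : ℕ) :
    |dirichlet n x| ≤ (n % 2 ^ m : ℕ) := by
  have h := sum_walsh_eq_of_block_const (c := fun _ => 1) (fun _ _ _ => rfl)
    (dirichlet_two_pow_eq_zero hx) n
  simp only [one_mul] at h
  rw [dirichlet, h, abs_mul]
  exact mul_le_of_le_one_left (abs_nonneg _) (abs_walsh_le_one _ x) |>.trans (abs_dirichlet_le _ x)

section Atoms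

variable {μ : Measure G} {p : ℝ} {M : ℕ} {a : G → ℝ}

lemma IsHaarG.measureReal_Icyl (hμ : IsHaarG μ) (m : ℕ) :
    μ.real (Icyl m) = (2 : ℝ) ^ (-(m : ℝ)) := by
  rw [measureReal_def, Icyl, hμ, toReal_pow, toReal_inv, Real.rpow_neg two_pos.le,
    Real.rpow_natCast, inv_pow]
  norm_num

lemma IsPAtom.coef_zero (ha : IsPAtom μ p M a) : coef μ a 0 = 0 := by
  simpa [coef, walsh] using ha.2.2.1

lemma IsPAtom.coef_block_const (ha : IsPAtom μ p M a) (q : ℕ) {l : ℕ} (hl : l < 2 ^ M) :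
    coef μ a (2 ^ M * q + l) = coef μ a (2 ^ M * q) := by
  refine integral_congr_ae (Filter.Eventually.of_forall fun t => ?_)
  by_cases ht : t ∈ Icyl M
  · simp only [walsh_two_pow_mul_add hl, walsh_eq_one_of_mem_Icyl hl ht, mul_one]
  · simp only [ha.2.1 t ht, zero_mul]

lemma IsPAtom.abs_coef_le (hμ : IsHaarG μ) (ha : IsPAtom μ p M a) (k : ℕ) :
    |coef μ a k| ≤ (2 : ℝ) ^ ((M : ℝ) / p - M) := by
  have hfin : μ (Icyl M) < ⊤ := by simp [Icyl, hμ M 0]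
  have hbound (t : G) (_ : t ∈ Icyl M) :
      ‖a t * walsh k t‖ ≤ (2 : ℝ) ^ ((M : ℝ) / p) := by
    rw [Real.norm_eq_abs, abs_mul]
    exact mul_le_of_le_one_right (abs_nonneg _) (abs_walsh_le_one k t) |>.trans (ha.2.2.2 t)
  have h := norm_setIntegral_le_of_norm_le_const hfin hbound
  rwa [setIntegral_eq_integral_of_forall_compl_eq_zero fun t ht => by rw [ha.2.1 t ht, zero_mul],
    hμ.measureReal_Icyl, ← Real.rpow_add two_pos, ← sub_eq_add_neg] at h

lemma IsPAtom.psum_eq (ha : IsPAtom μ p M a) {x : G} (hx : x ∉ Icyl M) (n : ℕ) :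
    psum μ n a x = coef μ a (2 ^ M * (n / 2 ^ M)) * walsh (2 ^ M * (n / 2 ^ M)) x
      * dirichlet (n % 2 ^ M) x :=
  sum_walsh_eq_of_block_const (fun q _ hl => ha.coef_block_const q hl)
    (dirichlet_two_pow_eq_zero hx) n

lemma IsPAtom.psum_eq_zero_of_lt (ha : IsPAtom μ p M a) {x : G} (hx : x ∉ Icyl M) {n : ℕ}
    (hn : n < 2 ^ M) : psum μ n a x = 0 := by
  rw [ha.psum_eq hx, Nat.div_eq_of_lt hn, mul_zero, ha.coef_zero, zero_mul, zero_mul]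

lemma IsPAtom.abs_psum_le (hμ : IsHaarG μ) (ha : IsPAtom μ p M a) {m : ℕ} (hm : m ≤ M)
    {x : G} (hx : x ∉ Icyl m) (n : ℕ) :
    |psum μ n a x| ≤ (2 : ℝ) ^ ((M : ℝ) / p - M) * (n % 2 ^ m : ℕ) := by
  have hD := abs_dirichlet_le_mod hx (n % 2 ^ M)
  rw [Nat.mod_mod_of_dvd n (pow_dvd_pow 2 hm)] at hD
  rw [ha.psum_eq (fun h => hx (Icyl_antitone hm h)), mul_assoc, abs_mul, abs_mul]
  gcongr
  · exact ha.abs_coef_le hμ _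
  · exact mul_le_of_le_one_left (abs_nonneg _) (abs_walsh_le_one _ x) |>.trans hD

end Atoms

lemma sub_le_rho {M s n : ℕ} (hn : 2 ^ M ≤ n) (hmod : n % 2 ^ (s + 1) ≠ 0) :
    M - s ≤ rho n := by
  have hhi : M ≤ hi n := Nat.le_log_of_pow_le one_lt_two hn
  have hlo : lo n ≤ s := by
    by_contra! h
    exact hmod (Nat.mod_eq_zero_of_dvd ((pow_dvd_pow 2 h).trans pow_padicValNat_dvd))
  unfold rho
  omega

lemma two_rpow_mul_le_weight {p : ℝ} (hp0 : 0 < p) (hp1 : p ≤ 1) {M s ρ r : ℕ}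
    (hsM : s ≤ M) (hρ : M - s ≤ ρ) (hr : r ≤ 2 ^ (s + 1)) :
    (2 : ℝ) ^ ((M : ℝ) / p - M) * r
      ≤ 2 * 2 ^ ((s : ℝ) / p) * 2 ^ ((ρ : ℝ) * (1 / p - 1)) := by
  have hq : 0 ≤ 1 / p - 1 := sub_nonneg.mpr (one_le_one_div hp0 hp1)
  have hρ' : (M : ℝ) - s ≤ ρ := by
    rw [← Nat.cast_sub hsM]
    exact_mod_cast hρ
  calc (2 : ℝ) ^ ((M : ℝ) / p - M) * r ≤ 2 ^ ((M : ℝ) / p - M) * 2 ^ ((s : ℝ) + 1) := by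
        gcongr
        rw [Real.rpow_add_one two_ne_zero, Real.rpow_natCast]
        exact_mod_cast hr
    _ = 2 * 2 ^ ((s : ℝ) / p) * 2 ^ (((M : ℝ) - s) * (1 / p - 1)) := by
        rw [← Real.rpow_add two_pos, show (M : ℝ) / p - M + (s + 1)
            = (s / p + (M - s) * (1 / p - 1)) + 1 by field_simp; ring,
          Real.rpow_add_one two_ne_zero, Real.rpow_add two_pos]
        ring
    _ ≤ 2 * 2 ^ ((s : ℝ) / p) * 2 ^ ((ρ : ℝ) * (1 / p - 1)) := by
        gcongr
        exact one_le_two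

/-- Weighted maximal estimate on atoms: there is `c_p > 0` such that for every `p`-atom `a`
on `I_M` and every `x ∈ I_s \ I_{s+1}` with `s < M`,
`sup_n |S_n a(x)| / 2^{ρ(n)(1/p-1)} ≤ c_p 2^{s/p}`. -/
theorem stmt13 (p : ℝ) (hp0 : 0 < p) (hp1 : p < 1) :
    ∃ c : ℝ, 0 < c ∧ ∀ (μ : Measure G), IsHaarG μ → ∀ (M : ℕ) (a : G → ℝ),
      IsPAtom μ p M a → ∀ s < M, ∀ x ∈ Icyl s \ Icyl (s + 1), ∀ n : ℕ,
        |psum μ n a x| / 2 ^ ((rho n : ℝ) * (1 / p - 1)) ≤ c * 2 ^ ((s : ℝ) / p) := by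
  refine ⟨2, two_pos, fun μ hμ M a ha s hsM x hx n => ?_⟩
  rcases eq_or_ne (psum μ n a x) 0 with h0 | h0
  · rw [h0, abs_zero, zero_div]
    positivity
  have hbound := ha.abs_psum_le hμ hsM hx.2 n
  have hxM : x ∉ Icyl M := fun h => hx.2 (Icyl_antitone hsM h)
  have hn : 2 ^ M ≤ n := not_lt.mp fun h => h0 (ha.psum_eq_zero_of_lt hxM h)
  have hmod : n % 2 ^ (s + 1) ≠ 0 := fun h => h0 (abs_nonpos_iff.mp (by simpa [h] using hbound))
  rw [div_le_iff₀ (by positivity)]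
  exact hbound.trans (two_rpow_mul_le_weight hp0 hp1.le hsM.le (sub_le_rho hn hmod)
    (Nat.mod_lt n (Nat.two_pow_pos _)).le)

end
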